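/- Let B be the elliptic curve over ℚ defined by the Weierstrass equation y² = x³ + 5. Then B has no nontrivial torsion over ℚ: every point of finite order in the group B(ℚ) is the identity (the point at infinity). -/

import Mathlib

/-!
On `y² = x³ + B` write `x = a / m` in lowest terms; then `y` has denominator `d` with `d² = m³`.
The tangent construction gives `x(2P) = x (x³ - 8B) / (4 y²) = a (a³ - 8B m³) / (4 y.num² m)`,
and when `a` is odd this numerator is prime to `4 m`, so `4 m` divides the denominator of `x(2P)`.
For `B = 5` the numerator `a` is odd (otherwise `y.num² ≡ 5 (mod 8)`) and `y ≠ 0` (`-5` is not a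
cube), so doubling strictly increases the denominator of the `x`-coordinate. A point of finite
order has only finitely many multiples, hence it is `0`.
-/

open WeierstrassCurve WeierstrassCurve.Affine

theorem IsOfFinAddOrder.eq_zero_of_lt_two_nsmul {G β : Type*} [AddMonoid G] [LinearOrder β]
    (f : G → β) (hf0 : ∀ Q, f 0 ≤ f Q) (hf : ∀ Q, Q ≠ 0 → f Q < f (2 • Q)) {P : G}
    (hP : IsOfFinAddOrder P) : P = 0 := by
  by_contra hP0
  obtain ⟨Q, hQ, hQmax⟩ :=
    Set.exists_max_image _ f hP.finite_multiples ⟨P, AddSubmonoid.mem_multiples P⟩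
  have hQ0 : Q = 0 := by
    by_contra hQ0
    exact (hf Q hQ0).not_ge (hQmax _ (nsmul_mem hQ 2))
  have h2P : f (2 • P) ≤ f 0 := hQ0 ▸ hQmax _ (nsmul_mem (AddSubmonoid.mem_multiples P) 2)
  exact (hf P hP0).not_ge (h2P.trans (hf0 P))

theorem Rat.dvd_den_of_mul_eq {q : ℚ} {N D k : ℤ} (h : q * D = N) (hkD : k ∣ D)
    (hkN : IsCoprime k N) : k ∣ q.den := by
  have hcross : q.num * D = N * q.den := by
    have : (q.num : ℚ) * D = N * q.den := by rw [← Rat.mul_den_eq_num, ← h]; ring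
    exact_mod_cast this
  exact hkN.dvd_of_dvd_mul_left (hcross ▸ hkD.mul_left q.num)

def mordellCurve {R : Type*} [CommRing R] (B : R) : WeierstrassCurve R := ⟨0, 0, 0, 0, B⟩

section MordellCurve

variable {R : Type*} [CommRing R] (B : R)

theorem mordellCurve_equation_iff {x y : R} :
    (mordellCurve B).toAffine.Equation x y ↔ y ^ 2 = x ^ 3 + B := by
  simp [equation_iff, mordellCurve]

theorem mordellCurve_negY (x y : R) : (mordellCurve B).toAffine.negY x y = -y := by
  simp [negY, mordellCurve]

end MordellCurve

section MordellCurve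

variable {F : Type*} [Field F] [DecidableEq F] (B : F)

theorem mordellCurve_add_self {x y : F} (h : (mordellCurve B).toAffine.Nonsingular x y)
    (hy : 2 * y ≠ 0) :
    ∃ y' h', Point.some x y h + Point.some x y h =
      Point.some (x * (x ^ 3 - 8 * B) / (4 * y ^ 2)) y' h' := by
  have heq := (mordellCurve_equation_iff B).mp h.1
  have hY : y ≠ (mordellCurve B).toAffine.negY x y := by
    rw [mordellCurve_negY]; contrapose! hy; linear_combination hy
  have hX : (mordellCurve B).toAffine.addX x x ((mordellCurve B).toAffine.slope x x y y) =
      x * (x ^ 3 - 8 * B) / (4 * y ^ 2) := by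
    have hy0 : y ≠ 0 := right_ne_zero_of_mul hy
    have h2 : (2 : F) ≠ 0 := left_ne_zero_of_mul hy
    rw [slope_of_Y_ne rfl hY, mordellCurve_negY]
    simp only [addX, mordellCurve]
    rw [show y - -y = 2 * y by ring, show (4 : F) = 2 ^ 2 by norm_num]
    field_simp
    linear_combination (-8 * x) * heq
  rw [Point.add_self_of_Y_ne hY]
  exact ⟨_, hX ▸ nonsingular_add h h fun hxy => hY hxy.2, by congr⟩

end MordellCurve

namespace MordellCurve

variable (B : ℤ) {x y : ℚ}

theorem num_sq_mul_den_pow_three (h : y ^ 2 = x ^ 3 + B) :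
    y.num ^ 2 * (x.den : ℤ) ^ 3 = (x.num ^ 3 + B * x.den ^ 3) * (y.den : ℤ) ^ 2 := by
  have hx := Rat.mul_den_eq_num x
  have hy := Rat.mul_den_eq_num y
  have : (y.num : ℚ) ^ 2 * (x.den : ℚ) ^ 3 = ((x.num : ℚ) ^ 3 + B * x.den ^ 3) * y.den ^ 2 := by
    rw [← hx, ← hy]; linear_combination (y.den : ℚ) ^ 2 * (x.den : ℚ) ^ 3 * h
  exact_mod_cast this

theorem den_sq_eq_den_pow_three (h : y ^ 2 = x ^ 3 + B) : (y.den : ℤ) ^ 2 = x.den ^ 3 := by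
  have hrel := num_sq_mul_den_pow_three B h
  refine Int.dvd_antisymm (by positivity) (by positivity) ?_ ?_
  · exact (y.isCoprime_num_den.symm.pow (m := 2) (n := 2)).dvd_of_dvd_mul_left
      ⟨x.num ^ 3 + B * x.den ^ 3, by linear_combination hrel⟩
  · exact (x.isCoprime_num_den.symm.pow (m := 3) (n := 3)).dvd_of_dvd_mul_left
      ⟨y.num ^ 2 - B * y.den ^ 2, by linear_combination -hrel⟩

theorem num_sq_eq (h : y ^ 2 = x ^ 3 + B) : y.num ^ 2 = x.num ^ 3 + B * x.den ^ 3 := by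
  have hrel := num_sq_mul_den_pow_three B h
  rw [den_sq_eq_den_pow_three B h] at hrel
  exact mul_right_cancel₀ (by positivity) hrel

theorem four_mul_den_dvd_den_doubleX (h : y ^ 2 = x ^ 3 + B) (hy : y ≠ 0) (ha : Odd x.num) :
    4 * x.den ∣ (x * (x ^ 3 - 8 * (B : ℚ)) / (4 * y ^ 2)).den := by
  have hxa : (x.num : ℚ) = x * x.den := (Rat.mul_den_eq_num x).symm
  have hyc : (y.num : ℚ) ^ 2 = y ^ 2 * x.den ^ 3 := by
    rw [← Rat.mul_den_eq_num y, mul_pow]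
    congr 1
    exact_mod_cast den_sq_eq_den_pow_three B h
  have hN : Odd (x.num * (x.num ^ 3 - 8 * B * x.den ^ 3)) :=
    ha.mul (ha.pow.sub_even ⟨4 * B * x.den ^ 3, by ring⟩)
  have hmN : IsCoprime (x.den : ℤ) (x.num * (x.num ^ 3 - 8 * B * x.den ^ 3)) := by
    rw [show x.num * (x.num ^ 3 - 8 * B * x.den ^ 3) =
      x.num ^ 4 + x.den * (-8 * B * x.num * x.den ^ 2) by ring]
    exact (x.isCoprime_num_den.symm.pow_right (n := 4)).add_mul_left_right _
  have h4N : IsCoprime (4 : ℤ) (x.num * (x.num ^ 3 - 8 * B * x.den ^ 3)) := by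
    simpa using (Int.isCoprime_two_left.mpr hN).pow_left (m := 2)
  have hdvd : (4 * x.den : ℤ) ∣ _ :=
    Rat.dvd_den_of_mul_eq (q := x * (x ^ 3 - 8 * (B : ℚ)) / (4 * y ^ 2))
      (D := 4 * y.num ^ 2 * x.den) (by push_cast; rw [hyc, hxa]; field_simp)
      ⟨y.num ^ 2, by ring⟩ (h4N.mul_left hmN)
  exact_mod_cast hdvd

theorem den_lt_den_doubleX (h : y ^ 2 = x ^ 3 + B) (hy : y ≠ 0) (ha : Odd x.num) :
    x.den < (x * (x ^ 3 - 8 * (B : ℚ)) / (4 * y ^ 2)).den :=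
  (by have := x.pos; omega : x.den < 4 * x.den).trans_le
    (Nat.le_of_dvd (Rat.den_pos _) (four_mul_den_dvd_den_doubleX B h hy ha))

theorem ne_zero_of_sq_eq_pow_three_add_five (h : y ^ 2 = x ^ 3 + 5) : y ≠ 0 := by
  have h' : y ^ 2 = x ^ 3 + ((5 : ℤ) : ℚ) := by exact_mod_cast h
  intro hy
  have hm : (x.den : ℤ) = 1 := by
    have := den_sq_eq_den_pow_three 5 h'
    rw [hy, Rat.den_zero, Nat.cast_one, one_pow] at this
    exact (pow_eq_one_iff_of_nonneg (by positivity) three_ne_zero).mp this.symm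
  have ha := num_sq_eq 5 h'
  rw [hm, hy, Rat.num_zero] at ha
  -- cubes modulo 9 are `0, ±1`, and `-5 ≡ 4`
  have := congrArg (Int.cast : ℤ → ZMod 9) ha
  push_cast at this
  exact (by decide : ∀ a : ZMod 9, (0 : ZMod 9) ^ 2 ≠ a ^ 3 + 5 * 1 ^ 3) _ this

theorem odd_num_of_sq_eq_pow_three_add_five (h : y ^ 2 = x ^ 3 + 5) : Odd x.num := by
  have h' : y ^ 2 = x ^ 3 + ((5 : ℤ) : ℚ) := by exact_mod_cast h
  by_contra hodd
  obtain ⟨a, ha⟩ := Int.not_odd_iff_even.mp hodd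
  have hm : Odd (x.den : ℤ) := by
    rw [← Int.isCoprime_two_left]
    exact x.isCoprime_num_den.of_isCoprime_of_dvd_left ⟨a, by rw [ha]; ring⟩
  obtain ⟨k, hk⟩ : Odd (y.den : ℤ) := by
    have := hm.pow (n := 3)
    rwa [← den_sq_eq_den_pow_three 5 h', Int.odd_pow, or_iff_left two_ne_zero] at this
  have hc : y.num ^ 2 = (a + a) ^ 3 + 5 * (2 * k + 1) ^ 2 := by
    rw [num_sq_eq 5 h', ← ha, ← hk, den_sq_eq_den_pow_three 5 h']
  have := congrArg (Int.cast : ℤ → ZMod 8) hc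
  push_cast at this
  exact (by decide : ∀ c a k : ZMod 8, c ^ 2 ≠ (a + a) ^ 3 + 5 * (2 * k + 1) ^ 2) _ _ _ this

end MordellCurve

def WeierstrassCurve.Affine.Point.xDen {W : WeierstrassCurve.Affine ℚ} : W.Point → ℕ
  | .zero => 0
  | .some x _ _ => x.den

/-- Let `B` be the elliptic curve over `ℚ` defined by `y² = x³ + 5`.
Then `B` has no nontrivial torsion over `ℚ`: every point of finite order in `B(ℚ)` is the
identity (the point at infinity). -/
theorem stmt_13 (W : WeierstrassCurve ℚ) (hW : W = ⟨0, 0, 0, 0, 5⟩) :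
    ∀ P : W.toAffine.Point, IsOfFinAddOrder P → P = 0 := by
  subst hW
  change ∀ P : (mordellCurve (5 : ℚ)).toAffine.Point, IsOfFinAddOrder P → P = 0
  intro P hP
  refine hP.eq_zero_of_lt_two_nsmul Point.xDen (fun _ => Nat.zero_le _) ?_
  rintro (_ | ⟨x, y, h⟩) hQ
  · exact (hQ rfl).elim
  have heq : y ^ 2 = x ^ 3 + 5 := (mordellCurve_equation_iff (5 : ℚ)).mp h.1
  have hy := MordellCurve.ne_zero_of_sq_eq_pow_three_add_five heq
  obtain ⟨y', h', hdouble⟩ := mordellCurve_add_self (5 : ℚ) h (mul_ne_zero two_ne_zero hy)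
  rw [two_nsmul, hdouble]
  exact MordellCurve.den_lt_den_doubleX 5 (by exact_mod_cast heq) hy
    (MordellCurve.odd_num_of_sq_eq_pow_three_add_five heq)
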